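/- arXiv:2411.09342 — 4 statements merged into one kernel-verified Lean document; each statement's English description precedes it below -/
import Mathlib

section
/- Let f : T² → T² be a C¹ local diffeomorphism on the 2-torus. Suppose that for every point x ∈ T² there exists n = n(x) ∈ ℕ with |det(Df^{n(x)}(x))| > 1. Then f is area-expanding: there exist ρ > 1 and C > 0 such that |det(Df^n(x))| > Cρ^n for all x ∈ T² and all n ∈ ℕ. -/
/-!
Taking logarithms turns `∏_{i<n} J(f^i x)` into the Birkhoff sum `S_n x = ∑_{i<n} log J(f^i x)`,
an additive cocycle: `S_{k+n} x = S_k x + S_n (f^k x)`. By compactness finitely many of the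
open sets `{S_n > 0}` cover the space, and the continuous function `max_{n ≤ N} S_n` has a positive
minimum `δ`: every orbit gains at least `δ` within `N` steps. Cutting an orbit segment of length
`n` into such blocks gives `S_n x ≥ c + κ n` with `κ = δ / (N + 1)`; exponentiating yields the
theorem with `ρ = exp κ`.
-/

open Finset Function

section BirkhoffSum

theorem continuous_birkhoffSum {X M : Type*} [TopologicalSpace X] [TopologicalSpace M]
    [AddCommMonoid M] [ContinuousAdd M] {f : X → X} {g : X → M}
    (hf : Continuous f) (hg : Continuous g) (n : ℕ) : Continuous (birkhoffSum f g n) :=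
  continuous_finsetSum _ fun k _ => hg.comp (hf.iterate k)

theorem nsmul_le_birkhoffSum {α M : Type*} [AddCommMonoid M] [Preorder M] [AddLeftMono M]
    (f : α → α) {g : α → M} {b : M} (hb : ∀ x, b ≤ g x) (n : ℕ) (x : α) :
    n • b ≤ birkhoffSum f g n x := by
  simpa [birkhoffSum] using card_nsmul_le_sum (range n) (fun k => g (f^[k] x)) b fun k _ => hb _

theorem exists_add_mul_lt_birkhoffSum {α : Type*} {f : α → α} {g : α → ℝ} {b : ℝ}
    (hb : ∀ x, b ≤ g x) {N : ℕ} {δ : ℝ} (hδ : 0 < δ)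
    (hgain : ∀ x, ∃ k ≤ N, δ ≤ birkhoffSum f g k x) :
    ∃ κ > 0, ∃ c : ℝ, ∀ n x, c + κ * n < birkhoffSum f g n x := by
  set b' := min b 0
  set κ := δ / (N + 1)
  have hκ : 0 < κ := by positivity
  have hκk : ∀ k ≤ N, κ * k < δ := fun k hk => by
    rw [div_mul_eq_mul_div, div_lt_iff₀ (by positivity)]
    exact mul_lt_mul_of_pos_left (by exact_mod_cast Nat.lt_succ_of_le hk) hδ
  refine ⟨κ, hκ, N * b' - δ, fun n => ?_⟩
  induction n using Nat.strong_induction_on with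
  | _ n ih =>
    intro x
    rcases le_or_gt n N with hn | hn
    · have hS : n * b' ≤ birkhoffSum f g n x := by
        simpa using nsmul_le_birkhoffSum f (fun y => (min_le_left b 0).trans (hb y)) n x
      have hNn : N * b' ≤ n * b' :=
        mul_le_mul_of_nonpos_right (by exact_mod_cast hn) (min_le_right b 0)
      linarith [hκk n hn]
    · obtain ⟨k, hkN, hk⟩ := hgain x
      have hk0 : k ≠ 0 := by
        rintro rfl
        simp only [birkhoffSum_zero] at hk
        linarith
      have hsplit : birkhoffSum f g n x
          = birkhoffSum f g k x + birkhoffSum f g (n - k) (f^[k] x) := by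
        rw [← birkhoffSum_add, Nat.add_sub_cancel' (by omega)]
      have ih' := ih (n - k) (by omega) (f^[k] x)
      rw [Nat.cast_sub (by omega), mul_sub] at ih'
      linarith [hκk k hkN]

variable {X : Type*} [TopologicalSpace X] [CompactSpace X]

theorem exists_uniform_gain_of_forall_exists_pos {S : ℕ → X → ℝ} (hS : ∀ n, Continuous (S n))
    (h : ∀ x, ∃ n, 0 < S n x) : ∃ N, ∃ δ > 0, ∀ x, ∃ n ≤ N, δ ≤ S n x := by
  obtain ⟨t, ht⟩ := isCompact_univ.elim_finite_subcover (fun n => {x | 0 < S n x})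
    (fun n => isOpen_lt continuous_const (hS n)) fun x _ => Set.mem_iUnion.2 (h x)
  set N := t.sup id
  set M : X → ℝ := fun x => (Iic N).sup' nonempty_Iic (S · x)
  have hM : Continuous M := Continuous.finset_sup'_apply _ fun n _ => hS n
  have hMpos : ∀ x, 0 < M x := by
    intro x
    obtain ⟨n, hn, hx⟩ := Set.mem_iUnion₂.1 (ht (Set.mem_univ x))
    exact lt_of_lt_of_le hx (le_sup' (S · x) (mem_Iic.2 (le_sup (f := id) hn)))
  obtain ⟨δ, hδ, hδM⟩ := isCompact_univ.exists_forall_le' hM.continuousOn fun x _ => hMpos x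
  refine ⟨N, δ, hδ, fun x => ?_⟩
  obtain ⟨n, hn, hMn⟩ := exists_mem_eq_sup' nonempty_Iic (S · x)
  exact ⟨n, mem_Iic.1 hn, hMn ▸ hδM x (Set.mem_univ x)⟩

theorem exists_add_mul_lt_birkhoffSum_of_forall_exists_pos {f : X → X} {g : X → ℝ}
    (hf : Continuous f) (hg : Continuous g) (h : ∀ x, ∃ n, 0 < birkhoffSum f g n x) :
    ∃ κ > 0, ∃ c : ℝ, ∀ n x, c + κ * n < birkhoffSum f g n x := by
  obtain ⟨b, hb⟩ := (isCompact_range hg).bddBelow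
  obtain ⟨N, δ, hδ, hgain⟩ :=
    exists_uniform_gain_of_forall_exists_pos (continuous_birkhoffSum hf hg) h
  exact exists_add_mul_lt_birkhoffSum (fun x => hb ⟨x, rfl⟩) hδ hgain

end BirkhoffSum

theorem prod_iterate_eq_exp_birkhoffSum {α : Type*} (f : α → α) {J : α → ℝ}
    (hJpos : ∀ x, 0 < J x) (n : ℕ) (x : α) :
    ∏ i ∈ range n, J (f^[i] x) = Real.exp (birkhoffSum f (Real.log ∘ J) n x) := by
  simp only [birkhoffSum, Real.exp_sum, comp_apply, Real.exp_log (hJpos _)]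

/-- Abstract formulation on the 2-torus `T² = ℝ/ℤ × ℝ/ℤ`: `f` is a continuous
map and `J x = |det Df(x)| > 0` is the (continuous, positive) Jacobian of the
local diffeomorphism `f`, so that `|det(Df^n(x))| = ∏_{i<n} J(f^i x)` by the
chain rule.  If for every `x` there is `n(x)` with `|det(Df^{n(x)}(x))| > 1`,
then `f` is area-expanding: there are `ρ > 1` and `C > 0` with
`|det(Df^n(x))| > C·ρ^n` for all `x` and `n`. -/
theorem stmt1
    (f : AddCircle (1:ℝ) × AddCircle (1:ℝ) → AddCircle (1:ℝ) × AddCircle (1:ℝ))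
    (hf : Continuous f)
    (J : AddCircle (1:ℝ) × AddCircle (1:ℝ) → ℝ)
    (hJ : Continuous J) (hJpos : ∀ x, 0 < J x)
    (hyp : ∀ x, ∃ n : ℕ, 1 < ∏ i ∈ Finset.range n, J (f^[i] x)) :
    ∃ ρ > (1:ℝ), ∃ C > (0:ℝ),
      ∀ x, ∀ n : ℕ, C * ρ ^ n < ∏ i ∈ Finset.range n, J (f^[i] x) := by
  simp only [prod_iterate_eq_exp_birkhoffSum f hJpos, Real.one_lt_exp_iff] at hyp ⊢
  obtain ⟨κ, hκ, c, hc⟩ := exists_add_mul_lt_birkhoffSum_of_forall_exists_pos hf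
    (hJ.log fun x => (hJpos x).ne') hyp
  refine ⟨Real.exp κ, Real.one_lt_exp_iff.2 hκ, Real.exp c, Real.exp_pos c, fun x n => ?_⟩
  rw [← Real.exp_nat_mul, ← Real.exp_add, Real.exp_lt_exp, mul_comm]
  exact hc n x
end

section
/- With the same setting: suppose additionally that |Fₙ(x)| ≤ e^{2‖ψ‖} for all real x ∈ U ∩ ℝ and ln Φ' is L-Lipschitz on U = (−T−ξ, T+ξ) × i(−ξ, ξ). Then for every z = x + iy ∈ U, ln|Fₙ(z)/Fₙ(x)| ≤ Σ_{i≥1} |ln Φ'(Φ^{-i}z) − ln Φ'(Φ^{-i}x)| ≤ (L/(1−α))|z − x| ≤ Lξ/(1−α), hence sup_{z∈U, n∈ℕ} ln|Fₙ(z)| ≤ 2‖ψ‖ + Lξ/(1−α) < ∞. -/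
open Finset

lemma geom_aux {α : ℝ} (hα0 : 0 < α) (hα1 : α < 1) (n : ℕ) :
    ∑ i ∈ range n, α ^ i ≤ 1 / (1 - α) := by
  have h1 : (0:ℝ) < 1 - α := by linarith
  rw [geom_sum_eq hα1.ne n]
  have heq : (α ^ n - 1) / (α - 1) = (1 - α ^ n) / (1 - α) := by
    rw [div_eq_div_iff (ne_of_lt (by linarith : α - 1 < 0)) h1.ne']
    ring
  rw [heq]
  have hpow : (0:ℝ) ≤ α ^ n := by positivity
  gcongr
  linarith

/-- Uniform bound on the rectangle.  With `U = (−T−ξ, T+ξ) × i(−ξ, ξ)`,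
`Fₙ(z) = ∏_{i=1}^n Φ'(Ψ^[i] z)/λ`, inverse iterates contracting
(`‖Ψ^[i]z − Ψ^[i]w‖ ≤ αⁱ‖z−w‖`, `α ∈ (0,1)`), `lg = ln Φ'` being
`L`-Lipschitz on `U`, and `|Fₙ(x)| ≤ e^{2‖ψ‖}` for real `x ∈ U`:
for every `z = x + iy ∈ U` and every `n`,
`ln|Fₙ(z)| ≤ 2‖ψ‖ + Lξ/(1−α)`. -/
theorem stmt10
    (T ξ α L ψnorm : ℝ)
    (hT : 0 ≤ T) (hξ0 : 0 < ξ) (hξ : ξ < 1/2)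
    (hα0 : 0 < α) (hα1 : α < 1) (hL : 0 ≤ L) (hψ : 0 ≤ ψnorm)
    (Φ Ψ lg : ℂ → ℂ) (lam : ℂ)
    (hlam : lam = deriv Φ 0) (hlam0 : lam ≠ 0)
    (hΨmaps : Set.MapsTo Ψ {z : ℂ | |z.re| < T + ξ ∧ |z.im| < ξ}
      {z : ℂ | |z.re| < T + ξ ∧ |z.im| < ξ})
    (hcontr : ∀ z ∈ {z : ℂ | |z.re| < T + ξ ∧ |z.im| < ξ},
      ∀ w ∈ {z : ℂ | |z.re| < T + ξ ∧ |z.im| < ξ},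
      ∀ i : ℕ, ‖Ψ^[i] z - Ψ^[i] w‖ ≤ α ^ i * ‖z - w‖)
    (hlg : ∀ z ∈ {z : ℂ | |z.re| < T + ξ ∧ |z.im| < ξ},
      Complex.exp (lg z) = deriv Φ z)
    (hlip : ∀ z ∈ {z : ℂ | |z.re| < T + ξ ∧ |z.im| < ξ},
      ∀ w ∈ {z : ℂ | |z.re| < T + ξ ∧ |z.im| < ξ},
      ‖lg z - lg w‖ ≤ L * ‖z - w‖)
    (hreal : ∀ x : ℝ, (x:ℂ) ∈ {z : ℂ | |z.re| < T + ξ ∧ |z.im| < ξ} →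
      ∀ n : ℕ, ‖∏ i ∈ Icc 1 n, deriv Φ (Ψ^[i] (x:ℂ)) / lam‖ ≤ Real.exp (2 * ψnorm)) :
    ∀ z ∈ {z : ℂ | |z.re| < T + ξ ∧ |z.im| < ξ}, ∀ n : ℕ,
      Real.log ‖∏ i ∈ Icc 1 n, deriv Φ (Ψ^[i] z) / lam‖
        ≤ 2 * ψnorm + L * ξ / (1 - α) := by
  intro z hz n
  have h1α : (0:ℝ) < 1 - α := by linarith
  have hRHS : 0 ≤ 2 * ψnorm + L * ξ / (1 - α) := by positivity
  by_cases h0 : ‖∏ i ∈ Icc 1 n, deriv Φ (Ψ^[i] z) / lam‖ = 0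
  · rw [h0, Real.log_zero]; exact hRHS
  have hpos : 0 < ‖∏ i ∈ Icc 1 n, deriv Φ (Ψ^[i] z) / lam‖ :=
    lt_of_le_of_ne (norm_nonneg _) (Ne.symm h0)
  -- the real point
  have hx : ((z.re : ℝ) : ℂ) ∈ {z : ℂ | |z.re| < T + ξ ∧ |z.im| < ξ} := by
    refine ⟨?_, ?_⟩ <;> simp [hz.1, hξ0]
  have hzU : |z.re| < T + ξ ∧ |z.im| < ξ := hz
  -- distance from z to its real part
  have hzx : ‖z - ((z.re : ℝ) : ℂ)‖ ≤ ξ := by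
    have h1 : z - ((z.re : ℝ) : ℂ) = Complex.I * z.im := by
      apply Complex.ext <;> simp
    rw [h1]
    simp only [norm_mul, Complex.norm_I, one_mul, Complex.norm_real, Real.norm_eq_abs]
    exact le_of_lt hzU.2
  -- iterates stay in U
  have hiterz : ∀ i : ℕ, Ψ^[i] z ∈ {z : ℂ | |z.re| < T + ξ ∧ |z.im| < ξ} :=
    fun i => hΨmaps.iterate i hz
  have hiterx : ∀ i : ℕ, Ψ^[i] ((z.re : ℝ) : ℂ) ∈ {z : ℂ | |z.re| < T + ξ ∧ |z.im| < ξ} :=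
    fun i => hΨmaps.iterate i hx
  -- factorwise bound
  have key : ∀ i ∈ Icc 1 n, ‖deriv Φ (Ψ^[i] z) / lam‖
      ≤ ‖deriv Φ (Ψ^[i] ((z.re : ℝ) : ℂ)) / lam‖ * Real.exp (L * α ^ i * ξ) := by
    intro i _
    have hdiff : ‖lg (Ψ^[i] z) - lg (Ψ^[i] ((z.re : ℝ) : ℂ))‖ ≤ L * α ^ i * ξ := by
      calc ‖lg (Ψ^[i] z) - lg (Ψ^[i] ((z.re : ℝ) : ℂ))‖
          ≤ L * ‖Ψ^[i] z - Ψ^[i] ((z.re : ℝ) : ℂ)‖ := hlip _ (hiterz i) _ (hiterx i)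
        _ ≤ L * (α ^ i * ‖z - ((z.re : ℝ) : ℂ)‖) := by
            exact mul_le_mul_of_nonneg_left (hcontr z hz _ hx i) hL
        _ ≤ L * α ^ i * ξ := by
            rw [← mul_assoc]
            exact mul_le_mul_of_nonneg_left hzx (by positivity)
    rw [← hlg _ (hiterz i), ← hlg _ (hiterx i)]
    rw [norm_div, norm_div,
      Complex.norm_exp, Complex.norm_exp, div_mul_eq_mul_div]
    apply div_le_div_of_nonneg_right ?_ (norm_nonneg lam)
    rw [← Real.exp_add]
    apply Real.exp_le_exp.mpr
    have : (lg (Ψ^[i] z)).re - (lg (Ψ^[i] ((z.re : ℝ) : ℂ))).re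
        ≤ L * α ^ i * ξ := by
      calc (lg (Ψ^[i] z)).re - (lg (Ψ^[i] ((z.re : ℝ) : ℂ))).re
          = (lg (Ψ^[i] z) - lg (Ψ^[i] ((z.re : ℝ) : ℂ))).re := by simp
        _ ≤ ‖lg (Ψ^[i] z) - lg (Ψ^[i] ((z.re : ℝ) : ℂ))‖ := (Complex.abs_re_le_norm _).trans' (le_abs_self _)
        _ ≤ L * α ^ i * ξ := hdiff
    linarith
  -- product bound
  have hprod : ‖∏ i ∈ Icc 1 n, deriv Φ (Ψ^[i] z) / lam‖
      ≤ Real.exp (2 * ψnorm) * Real.exp (∑ i ∈ Icc 1 n, L * α ^ i * ξ) := by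
    calc ‖∏ i ∈ Icc 1 n, deriv Φ (Ψ^[i] z) / lam‖
        = ∏ i ∈ Icc 1 n, ‖deriv Φ (Ψ^[i] z) / lam‖ := norm_prod _ _
      _ ≤ ∏ i ∈ Icc 1 n, (‖deriv Φ (Ψ^[i] ((z.re : ℝ) : ℂ)) / lam‖
            * Real.exp (L * α ^ i * ξ)) := by
          apply Finset.prod_le_prod (fun i _ => norm_nonneg _) key
      _ = (∏ i ∈ Icc 1 n, ‖deriv Φ (Ψ^[i] ((z.re : ℝ) : ℂ)) / lam‖)
            * ∏ i ∈ Icc 1 n, Real.exp (L * α ^ i * ξ) := Finset.prod_mul_distrib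
      _ ≤ Real.exp (2 * ψnorm) * Real.exp (∑ i ∈ Icc 1 n, L * α ^ i * ξ) := by
          rw [← Real.exp_sum]
          apply mul_le_mul_of_nonneg_right ?_ (Real.exp_nonneg _)
          rw [← norm_prod]
          exact hreal z.re hx n
  -- sum bound
  have hsum : ∑ i ∈ Icc 1 n, L * α ^ i * ξ ≤ L * ξ / (1 - α) := by
    have h1 : ∑ i ∈ Icc 1 n, L * α ^ i * ξ = L * ξ * ∑ i ∈ Icc 1 n, α ^ i := by
      rw [Finset.mul_sum]; apply Finset.sum_congr rfl; intro i _; ring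
    have h2 : ∑ i ∈ Icc 1 n, α ^ i ≤ ∑ i ∈ range (n + 1), α ^ i := by
      apply Finset.sum_le_sum_of_subset_of_nonneg
      · intro i hi
        simp only [Finset.mem_Icc] at hi
        simp only [Finset.mem_range]
        omega
      · intro i _ _; positivity
    have h3 := geom_aux hα0 hα1 (n + 1)
    rw [h1, div_eq_mul_one_div]
    exact mul_le_mul_of_nonneg_left (h2.trans h3) (by positivity)
  calc Real.log ‖∏ i ∈ Icc 1 n, deriv Φ (Ψ^[i] z) / lam‖
      ≤ Real.log (Real.exp (2 * ψnorm) * Real.exp (∑ i ∈ Icc 1 n, L * α ^ i * ξ)) :=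
        Real.log_le_log hpos hprod
    _ = 2 * ψnorm + ∑ i ∈ Icc 1 n, L * α ^ i * ξ := by
        rw [Real.log_mul (Real.exp_ne_zero _) (Real.exp_ne_zero _), Real.log_exp, Real.log_exp]
    _ ≤ 2 * ψnorm + L * ξ / (1 - α) := by linarith
end

section
/- Let U ⊆ ℂ be open and (Fₙ) a sequence of holomorphic functions on U that is uniformly bounded on U and converges pointwise on U to a function F. Then Fₙ converges uniformly on every compact subset K ⊆ U, and F is holomorphic on U. -/
open Filter Metric Set

/-- Cauchy-estimate Lipschitz bound: a function holomorphic and bounded on a ball satisfies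
a Lipschitz-type estimate with respect to the center. -/
lemma lipschitz_of_bounded_ball {f : ℂ → ℂ} {x : ℂ} {r C : ℝ}
    (hf : DifferentiableOn ℂ f (ball x r))
    (hC : ∀ z ∈ ball x r, ‖f z - f x‖ < C) :
    ∀ z ∈ ball x r, ‖f z - f x‖ ≤ C / r * ‖z - x‖ := by
  intro z hz
  rcases eq_or_ne z x with rfl | hne
  · simp
  · have hmaps : MapsTo f (ball x r) (ball (f x) C) := by
      intro w hw
      rw [mem_ball, dist_eq_norm]
      exact hC w hw
    have := Complex.norm_dslope_le_div_of_mapsTo_ball hf (hmaps.mono_right ball_subset_closedBall) hz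
    rw [dslope_of_ne _ hne, slope_def_field, div_eq_mul_inv, norm_mul, norm_inv] at this
    have hzx : (0:ℝ) < ‖z - x‖ := by
      rw [norm_pos_iff]
      exact sub_ne_zero.mpr hne
    calc ‖f z - f x‖ = ‖f z - f x‖ * ‖z - x‖⁻¹ * ‖z - x‖ := by
          rw [mul_assoc, inv_mul_cancel₀ hzx.ne', mul_one]
      _ ≤ C / r * ‖z - x‖ := by
          exact mul_le_mul_of_nonneg_right this hzx.le

/-- Let `U ⊆ ℂ` be open and `(Fₙ)` a sequence of holomorphic functions on `U`,
uniformly bounded on `U` and converging pointwise on `U` to `G`.  Then `Fₙ → G`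
uniformly on every compact subset of `U`, and `G` is holomorphic on `U`. -/
theorem stmt11
    (U : Set ℂ) (hU : IsOpen U)
    (F : ℕ → ℂ → ℂ) (G : ℂ → ℂ)
    (hhol : ∀ n, DifferentiableOn ℂ (F n) U)
    (M : ℝ) (hbd : ∀ n, ∀ z ∈ U, ‖F n z‖ ≤ M)
    (hptwise : ∀ z ∈ U, Tendsto (fun n => F n z) atTop (nhds (G z))) :
    (∀ K ⊆ U, IsCompact K → TendstoUniformlyOn F G atTop K) ∧
      DifferentiableOn ℂ G U := by
  set C : ℝ := 2 * max M 0 + 1 with hCdef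
  have hC0 : (0:ℝ) < C := by positivity
  -- Equicontinuity at every point of U via the Cauchy estimate
  have heq : ∀ x ∈ U, EquicontinuousAt F x := by
    intro x hx
    obtain ⟨r, hr0, hball⟩ := Metric.isOpen_iff.mp hU x hx
    have key : ∀ n, ∀ z ∈ ball x r, ‖F n z - F n x‖ ≤ C / r * ‖z - x‖ := by
      intro n
      refine lipschitz_of_bounded_ball ((hhol n).mono hball) ?_
      intro z hz
      calc ‖F n z - F n x‖ ≤ ‖F n z‖ + ‖F n x‖ := norm_sub_le _ _
        _ ≤ max M 0 + max M 0 := add_le_add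
            (le_max_of_le_left (hbd n z (hball hz)))
            (le_max_of_le_left (hbd n x hx))
        _ < C := by rw [hCdef]; ring_nf; linarith
    rw [Metric.equicontinuousAt_iff]
    intro ε hε
    refine ⟨min (r / 2) (ε * r / (2 * C)), by positivity, ?_⟩
    intro z hz n
    have hzball : z ∈ ball x r := by
      rw [mem_ball]
      calc dist z x < min (r / 2) (ε * r / (2 * C)) := hz
        _ ≤ r / 2 := min_le_left _ _
        _ < r := by linarith
    have h1 := key n z hzball
    rw [dist_comm, dist_eq_norm]
    calc ‖F n z - F n x‖ ≤ C / r * ‖z - x‖ := h1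
      _ = C / r * dist z x := by rw [dist_eq_norm]
      _ ≤ C / r * (ε * r / (2 * C)) := by
          apply mul_le_mul_of_nonneg_left _ (by positivity)
          exact le_of_lt (lt_of_lt_of_le hz (min_le_right _ _))
      _ = ε / 2 := by field_simp
      _ < ε := by linarith
  -- Uniform convergence on compacts from equicontinuity + pointwise convergence
  have huc : ∀ K ⊆ U, IsCompact K → TendstoUniformlyOn F G atTop K := by
    intro K hKU hK
    have heqK : ∀ S ∈ ({K} : Set (Set ℂ)), EquicontinuousOn F S := by
      rintro S rfl
      exact fun x hx => (heq x (hKU hx)).equicontinuousWithinAt S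
    have hcpt : ∀ S ∈ ({K} : Set (Set ℂ)), IsCompact S := by
      rintro S rfl; exact hK
    have := (EquicontinuousOn.tendsto_uniformOnFun_iff_pi' hcpt heqK atTop G).mpr ?_
    · have h2 := (UniformOnFun.tendsto_iff_tendstoUniformlyOn
        (F := fun n => UniformOnFun.ofFun {K} (F n)) (f := UniformOnFun.ofFun {K} G)
        (p := atTop)).mp this
      simpa [Function.comp_def] using h2 K rfl
    · rw [tendsto_pi_nhds]
      rintro ⟨z, hz⟩
      simp only [sUnion_singleton] at hz
      exact hptwise z (hKU hz)
  refine ⟨huc, ?_⟩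
  -- Holomorphy of the limit
  have hloc : TendstoLocallyUniformlyOn F G atTop U := by
    rw [tendstoLocallyUniformlyOn_iff_forall_isCompact hU]
    exact fun K hKU hK => huc K hKU hK
  exact hloc.differentiableOn (Eventually.of_forall hhol) hU
end

section
/- Let F̃ : ℝ² → ℝ² be a homeomorphism, h̃ : ℝ² → ℝ² continuous with h̃∘F̃ = A∘h̃, sup‖h̃ − id‖ = M₀ < ∞, A expanding linear. Suppose a curve family 𝓕ᵘ is F̃-invariant and quasi-isometric: a·d(x,y) + b ≥ d_{𝓕ᵘ}(x,y) for points on the same leaf, and leafwise distance expands: d_{𝓕ᵘ}(F̃ⁿx, F̃ⁿy) ≥ μⁿ·d_{𝓕ᵘ}(x,y) with μ > 1. If ỹ' ∈ 𝓕ᵘ(ỹ) and ỹ' ≠ ỹ, then h̃(ỹ) ≠ h̃(ỹ'). In other words, h̃ is injective along each leaf of 𝓕ᵘ. -/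
/-! If `h y = h y'`, the semiconjugacy gives `h (Fⁿ y) = Aⁿ (h y) = h (Fⁿ y')` for all `n`, and since
`h` moves points by at most `M₀` the orbits of `y` and `y'` stay within distance `2 M₀`. The
quasi-isometry bound then keeps the leafwise distance `dU (Fⁿ y) (Fⁿ y')` bounded, while it grows
at least like `μⁿ dU y y'`; hence `dU y y' ≤ 0`, so `y' = y`. -/

theorem nonpos_of_forall_pow_mul_le {μ c C : ℝ} (hμ : 1 < μ) (hle : ∀ n : ℕ, μ ^ n * c ≤ C) :
    c ≤ 0 := by
  by_contra! hc
  obtain ⟨n, hn⟩ := pow_unbounded_of_one_lt (C / c) hμ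
  have := hle n
  rw [div_lt_iff₀ hc] at hn
  linarith

theorem iterate_mem_of_mem {α : Type*} {f : α → α} {𝓕 : α → Set α}
    (hf : ∀ x, ∀ z ∈ 𝓕 x, f z ∈ 𝓕 (f x)) {y y' : α} (hy : y' ∈ 𝓕 y) (n : ℕ) :
    f^[n] y' ∈ 𝓕 (f^[n] y) := by
  induction n with
  | zero => exact hy
  | succ n ih =>
    rw [Function.iterate_succ_apply', Function.iterate_succ_apply']
    exact hf _ _ ih

theorem dist_le_two_mul_of_apply_eq {α : Type*} [PseudoMetricSpace α] {h : α → α} {M : ℝ}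
    (hM : ∀ x, dist (h x) x ≤ M) {x y : α} (hxy : h x = h y) : dist x y ≤ 2 * M :=
  calc dist x y ≤ dist x (h x) + dist (h y) y := hxy ▸ dist_triangle x (h x) y
    _ ≤ M + M := add_le_add (dist_comm x (h x) ▸ hM x) (hM y)
    _ = 2 * M := (two_mul M).symm

theorem eq_of_mem_leaf_of_forall_dist_iterate_le {α : Type*} [PseudoMetricSpace α] {f : α → α}
    {𝓕 : α → Set α} {dU : α → α → ℝ} {a b μ C : ℝ} (ha : 0 ≤ a) (hμ : 1 < μ)
    (hf : ∀ x, ∀ z ∈ 𝓕 x, f z ∈ 𝓕 (f x))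
    (hqi : ∀ x, ∀ y ∈ 𝓕 x, dU x y ≤ a * dist x y + b)
    (hpos : ∀ x, ∀ y ∈ 𝓕 x, y ≠ x → 0 < dU x y)
    (hexp : ∀ x, ∀ y ∈ 𝓕 x, ∀ n : ℕ, μ ^ n * dU x y ≤ dU (f^[n] x) (f^[n] y))
    {y y' : α} (hy : y' ∈ 𝓕 y) (hbdd : ∀ n : ℕ, dist (f^[n] y) (f^[n] y') ≤ C) : y' = y := by
  by_contra hne
  refine (hpos y y' hy hne).not_ge (nonpos_of_forall_pow_mul_le (C := a * C + b) hμ fun n => ?_)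
  calc μ ^ n * dU y y' ≤ dU (f^[n] y) (f^[n] y') := hexp y y' hy n
    _ ≤ a * dist (f^[n] y) (f^[n] y') + b := hqi _ _ (iterate_mem_of_mem hf hy n)
    _ ≤ a * C + b := by gcongr; exact hbdd n

theorem stmt18_general
    (F : EuclideanSpace ℝ (Fin 2) ≃ₜ EuclideanSpace ℝ (Fin 2))
    (A : EuclideanSpace ℝ (Fin 2) →ₗ[ℝ] EuclideanSpace ℝ (Fin 2))
    (h : EuclideanSpace ℝ (Fin 2) → EuclideanSpace ℝ (Fin 2))
    (hconj : ∀ x, h (F x) = A (h x))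
    (M₀ : ℝ) (hM₀ : ∀ x, ‖h x - x‖ ≤ M₀)
    (𝓕 : EuclideanSpace ℝ (Fin 2) → Set (EuclideanSpace ℝ (Fin 2)))
    (hinv : ∀ x, F '' 𝓕 x = 𝓕 (F x))
    (dU : EuclideanSpace ℝ (Fin 2) → EuclideanSpace ℝ (Fin 2) → ℝ)
    (a b μ : ℝ) (ha : 0 < a) (hμ : 1 < μ)
    (hqi : ∀ x, ∀ y ∈ 𝓕 x, dU x y ≤ a * dist x y + b)
    (hpos : ∀ x, ∀ y ∈ 𝓕 x, y ≠ x → 0 < dU x y)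
    (hexp : ∀ x, ∀ y ∈ 𝓕 x, ∀ n : ℕ,
      μ ^ n * dU x y ≤ dU ((⇑F)^[n] x) ((⇑F)^[n] y)) :
    ∀ y y', y' ∈ 𝓕 y → y' ≠ y → h y ≠ h y' := by
  intro y y' hy hne heq
  have hsemiconj : Function.Semiconj h F A := hconj
  have horbit_eq (n : ℕ) : h ((⇑F)^[n] y) = h ((⇑F)^[n] y') := by
    rw [(hsemiconj.iterate_right n).eq, (hsemiconj.iterate_right n).eq, heq]
  have hleaf : ∀ x, ∀ z ∈ 𝓕 x, F z ∈ 𝓕 (F x) := fun x z hz =>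
    hinv x ▸ Set.mem_image_of_mem F hz
  exact hne <| eq_of_mem_leaf_of_forall_dist_iterate_le ha.le hμ hleaf hqi hpos hexp hy
    fun n => dist_le_two_mul_of_apply_eq (fun x => (dist_eq_norm _ _).trans_le (hM₀ x))
      (horbit_eq n)

/-- Injectivity of the semiconjugacy along unstable leaves.  Let `F` be a
homeomorphism of `ℝ²`, `A` linear, `h` continuous with `h∘F = A∘h` and
`‖h − id‖ ≤ M₀`.  Let `𝓕ᵘ` be an `F`-invariant family of leaves with a
leafwise distance `dU` which is quasi-isometric (`dU x y ≤ a·d(x,y) + b`),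
positive on distinct leaf points, and expanded by `F`
(`dU(Fⁿx, Fⁿy) ≥ μⁿ·dU(x,y)`, `μ > 1`).  Then `h` is injective along each
leaf: if `y' ∈ 𝓕ᵘ(y)` and `y' ≠ y` then `h y ≠ h y'`. -/
theorem stmt18
    (F : EuclideanSpace ℝ (Fin 2) ≃ₜ EuclideanSpace ℝ (Fin 2))
    (A : EuclideanSpace ℝ (Fin 2) →ₗ[ℝ] EuclideanSpace ℝ (Fin 2))
    (h : EuclideanSpace ℝ (Fin 2) → EuclideanSpace ℝ (Fin 2))
    (hcont : Continuous h)
    (hconj : ∀ x, h (F x) = A (h x))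
    (M₀ : ℝ) (hM₀ : ∀ x, ‖h x - x‖ ≤ M₀)
    (𝓕 : EuclideanSpace ℝ (Fin 2) → Set (EuclideanSpace ℝ (Fin 2)))
    (hinv : ∀ x, F '' 𝓕 x = 𝓕 (F x))
    (dU : EuclideanSpace ℝ (Fin 2) → EuclideanSpace ℝ (Fin 2) → ℝ)
    (a b μ : ℝ) (ha : 0 < a) (hb : 0 ≤ b) (hμ : 1 < μ)
    (hqi : ∀ x, ∀ y ∈ 𝓕 x, dU x y ≤ a * dist x y + b)
    (hpos : ∀ x, ∀ y ∈ 𝓕 x, y ≠ x → 0 < dU x y)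
    (hexp : ∀ x, ∀ y ∈ 𝓕 x, ∀ n : ℕ,
      μ ^ n * dU x y ≤ dU ((⇑F)^[n] x) ((⇑F)^[n] y)) :
    ∀ y y', y' ∈ 𝓕 y → y' ≠ y → h y ≠ h y' :=
  stmt18_general F A h hconj M₀ hM₀ 𝓕 hinv dU a b μ ha hμ hqi hpos hexp
end
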